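/- Define f : ℝ → ℝ by f(x) = ((1+x)/2)·log(1+x) + ((1−x)/2)·log(1−x), where log is the real natural logarithm (with the convention Real.log 0 = 0, so that f(±1) = log 2). Then for all r_x, r_y, r_z ∈ ℝ with r_x² + r_y² + r_z² ≤ 1, one has f(r_x) + f(r_z) ≤ f(√(r_x² + r_y² + r_z²)). (This inequality expresses that the relative entropy of asymmetry of a qubit Bloch state with respect to the ℤ₂ symmetry generated by Pauli X never increases under Z-dephasing.) -/

import Mathlib

noncomputable section

open Real

/-- The binary-entropy-like function `f(x) = ((1+x)/2)·log(1+x) + ((1−x)/2)·log(1−x)`. -/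
def fAsym (x : ℝ) : ℝ :=
  ((1 + x) / 2) * Real.log (1 + x) + ((1 - x) / 2) * Real.log (1 - x)

lemma continuous_fAsym : Continuous fAsym := by
  have h : fAsym = fun x => ((1+x) * Real.log (1+x))/2 + ((1-x) * Real.log (1-x))/2 := by
    funext x; unfold fAsym; ring
  rw [h]
  exact ((Real.continuous_mul_log.comp (continuous_const.add continuous_id)).div_const 2).add
    ((Real.continuous_mul_log.comp (continuous_const.sub continuous_id)).div_const 2)

lemma hasDerivAt_fAsym {x : ℝ} (h1 : -1 < x) (h2 : x < 1) :
    HasDerivAt fAsym ((Real.log (1+x) - Real.log (1-x))/2) x := by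
  have hx1 : (1:ℝ) + x ≠ 0 := by nlinarith
  have hx2 : (1:ℝ) - x ≠ 0 := by nlinarith
  have hp : HasDerivAt (fun y : ℝ => 1 + y) 1 x := (hasDerivAt_id x).const_add 1
  have hm : HasDerivAt (fun y : ℝ => 1 - y) (-1) x := by
    simpa using (hasDerivAt_id x).const_sub 1
  have hl1 : HasDerivAt (fun y : ℝ => Real.log (1+y)) (1/(1+x)) x := by
    exact ((Real.hasDerivAt_log hx1).comp x hp).congr_deriv (by simp)
  have hl2 : HasDerivAt (fun y : ℝ => Real.log (1-y)) (-(1/(1-x))) x := by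
    exact ((Real.hasDerivAt_log hx2).comp x hm).congr_deriv (by simp)
  have h1' : HasDerivAt (fun y : ℝ => ((1+y)/2) * Real.log (1+y))
      ((1/2) * Real.log (1+x) + ((1+x)/2) * (1/(1+x))) x := by
    exact (((hasDerivAt_id x).const_add 1).div_const 2).mul hl1
  have h2' : HasDerivAt (fun y : ℝ => ((1-y)/2) * Real.log (1-y))
      ((-1/2) * Real.log (1-x) + ((1-x)/2) * (-(1/(1-x)))) x := by
    have : HasDerivAt (fun y : ℝ => (1-y)/2) (-1/2) x := by
      simpa using (((hasDerivAt_id x).const_sub 1).div_const 2)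
    exact this.mul hl2
  have := h1'.add h2'
  refine this.congr_deriv ?_
  field_simp
  ring

-- A x = 2 artanh x
def Afn (x : ℝ) : ℝ := Real.log (1+x) - Real.log (1-x)

lemma hasDerivAt_Afn {x : ℝ} (h1 : -1 < x) (h2 : x < 1) :
    HasDerivAt Afn (2/(1-x^2)) x := by
  have hx1 : (1:ℝ) + x ≠ 0 := by nlinarith
  have hx2 : (1:ℝ) - x ≠ 0 := by nlinarith
  have hp : HasDerivAt (fun y : ℝ => 1 + y) 1 x := (hasDerivAt_id x).const_add 1
  have hm : HasDerivAt (fun y : ℝ => 1 - y) (-1) x := by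
    simpa using (hasDerivAt_id x).const_sub 1
  have hl1 : HasDerivAt (fun y : ℝ => Real.log (1+y)) (1/(1+x)) x := by
    exact ((Real.hasDerivAt_log hx1).comp x hp).congr_deriv (by simp)
  have hl2 : HasDerivAt (fun y : ℝ => Real.log (1-y)) (-(1/(1-x))) x := by
    exact ((Real.hasDerivAt_log hx2).comp x hm).congr_deriv (by simp)
  have hx3 : (1:ℝ) - x^2 ≠ 0 := by nlinarith
  have := hl1.sub hl2
  refine this.congr_deriv ?_
  field_simp
  ring

lemma psi_nonneg {x : ℝ} (h1 : 0 ≤ x) (h2 : x < 1) :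
    Afn x ≤ 2*x/(1-x^2) := by
  set ψ : ℝ → ℝ := fun y => 2*y/(1-y^2) - Afn y with hψ
  have hd : ∀ y ∈ Set.Ioo (-1:ℝ) 1, HasDerivAt ψ (4*y^2/(1-y^2)^2) y := by
    intro y hy
    have hy1 : -1 < y := hy.1
    have hy2 : (1:ℝ) - y^2 ≠ 0 := by nlinarith [hy.1, hy.2]
    have hr : HasDerivAt (fun z : ℝ => 2*z/(1-z^2)) ((2*(1-y^2) - 2*y*(-(2*y)))/(1-y^2)^2) y := by
      have hn : HasDerivAt (fun z : ℝ => 2*z) 2 y := by simpa using (hasDerivAt_id y).const_mul 2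
      have hden : HasDerivAt (fun z : ℝ => 1-z^2) (-(2*y)) y := by
        simpa using ((hasDerivAt_pow 2 y).const_sub 1)
      exact hn.div hden hy2
    have := hr.sub (hasDerivAt_Afn hy1 hy.2)
    refine this.congr_deriv ?_
    field_simp
    ring
  have hmono : MonotoneOn ψ (Set.Ico (0:ℝ) 1) := by
    apply monotoneOn_of_deriv_nonneg (convex_Ico _ _)
    · intro y hy
      exact (hd y ⟨by linarith [hy.1], hy.2⟩).continuousAt.continuousWithinAt
    · rw [interior_Ico]
      intro y hy
      exact (hd y ⟨by linarith [hy.1], hy.2⟩).differentiableAt.differentiableWithinAt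
    · rw [interior_Ico]
      intro y hy
      rw [(hd y ⟨by linarith [hy.1], hy.2⟩).deriv]
      positivity
  have h0 : ψ 0 = 0 := by simp [hψ, Afn]
  have := hmono (Set.mem_Ico.2 ⟨le_refl 0, by norm_num⟩)
    (Set.mem_Ico.2 ⟨h1, h2⟩) h1
  rw [h0] at this
  have h' : 0 ≤ 2*x/(1-x^2) - Afn x := this
  linarith

lemma Afn_ratio_mono {a s : ℝ} (ha : 0 < a) (has : a ≤ s) (hs : s < 1) :
    s * Afn a ≤ a * Afn s := by
  have hs0 : 0 < s := lt_of_lt_of_le ha has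
  set φ : ℝ → ℝ := fun y => Afn y / y with hφ
  have hd : ∀ y ∈ Set.Ioo (0:ℝ) 1, HasDerivAt φ ((2/(1-y^2) * y - Afn y)/y^2) y := by
    intro y hy
    have := (hasDerivAt_Afn (by linarith [hy.1]) hy.2).div (hasDerivAt_id y) (ne_of_gt hy.1)
    exact this.congr_deriv (by simp)
  have hmono : MonotoneOn φ (Set.Ioo (0:ℝ) 1) := by
    apply monotoneOn_of_deriv_nonneg (convex_Ioo _ _)
    · intro y hy
      exact (hd y hy).continuousAt.continuousWithinAt
    · rw [interior_Ioo]
      intro y hy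
      exact (hd y hy).differentiableAt.differentiableWithinAt
    · rw [interior_Ioo]
      intro y hy
      rw [(hd y hy).deriv]
      have h1 : Afn y ≤ 2*y/(1-y^2) := psi_nonneg (le_of_lt hy.1) hy.2
      have h2 : (0:ℝ) < 1 - y^2 := by nlinarith [hy.1, hy.2]
      have : 2/(1-y^2) * y = 2*y/(1-y^2) := by ring
      rw [this]
      have := sub_nonneg.2 h1
      positivity
  have := hmono (Set.mem_Ioo.2 ⟨ha, lt_of_le_of_lt has hs⟩) (Set.mem_Ioo.2 ⟨hs0, hs⟩) has
  have h2 : Afn a / a ≤ Afn s / s := this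
  rw [div_le_div_iff₀ ha hs0] at h2
  linarith

lemma fAsym_monotoneOn : MonotoneOn fAsym (Set.Icc (0:ℝ) 1) := by
  apply monotoneOn_of_deriv_nonneg (convex_Icc _ _) continuous_fAsym.continuousOn
  · rw [interior_Icc]
    intro y hy
    exact (hasDerivAt_fAsym (by linarith [hy.1]) hy.2).differentiableAt.differentiableWithinAt
  · rw [interior_Icc]
    intro y hy
    rw [(hasDerivAt_fAsym (by linarith [hy.1]) hy.2).deriv]
    have : Real.log (1-y) ≤ Real.log (1+y) :=
      Real.log_le_log (by linarith [hy.2]) (by linarith [hy.1])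
    linarith

lemma fAsym_zero : fAsym 0 = 0 := by simp [fAsym]


lemma fAsym_key {a c : ℝ} (ha : 0 ≤ a) (hc : 0 ≤ c) (h : a^2 + c^2 ≤ 1) :
    fAsym a + fAsym c ≤ fAsym (Real.sqrt (a^2 + c^2)) := by
  rcases eq_or_lt_of_le ha with ha0 | ha0
  · rw [← ha0]
    simp only [fAsym_zero, zero_add, ne_eq, OfNat.ofNat_ne_zero, not_false_eq_true, zero_pow]
    rw [Real.sqrt_sq hc]
  rcases eq_or_lt_of_le hc with hc0 | hc0
  · rw [← hc0]
    simp only [fAsym_zero, add_zero, ne_eq, OfNat.ofNat_ne_zero, not_false_eq_true, zero_pow,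
      add_zero]
    rw [Real.sqrt_sq ha]
  -- main case 0 < a, 0 < c
  set b := Real.sqrt (1 - c^2) with hb
  have hc1 : c ≤ 1 := by nlinarith
  have hab : a ≤ b := by
    rw [hb]
    have : a = Real.sqrt (a^2) := (Real.sqrt_sq ha).symm
    rw [this]
    exact Real.sqrt_le_sqrt (by nlinarith)
  set F : ℝ → ℝ := fun x => fAsym (Real.sqrt (x^2 + c^2)) - fAsym x with hF
  have hcont : Continuous F := by
    apply Continuous.sub _ continuous_fAsym
    exact continuous_fAsym.comp (Real.continuous_sqrt.comp (by continuity))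
  have hd : ∀ x ∈ Set.Ioo 0 b, HasDerivAt F
      ((Real.log (1+Real.sqrt (x^2+c^2)) - Real.log (1-Real.sqrt (x^2+c^2)))/2
        * (x / Real.sqrt (x^2+c^2)) - (Real.log (1+x) - Real.log (1-x))/2) x := by
    intro x hx
    have hx0 : 0 < x := hx.1
    have hs2pos : 0 < x^2 + c^2 := by positivity
    set s := Real.sqrt (x^2 + c^2) with hs
    have hspos : 0 < s := Real.sqrt_pos.2 hs2pos
    have hs2 : s^2 = x^2 + c^2 := Real.sq_sqrt (le_of_lt hs2pos)
    have hbnn : 0 ≤ b := Real.sqrt_nonneg _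
    have hxb2 : x^2 < 1 - c^2 := by
      have hb0 : 0 ≤ 1 - c^2 := by nlinarith
      have hb2 : b^2 = 1 - c^2 := Real.sq_sqrt hb0
      nlinarith [sq_lt_sq' (by linarith [hx.1] : -b < x) hx.2]
    have hs1 : s < 1 := by
      rw [hs, show (1:ℝ) = Real.sqrt 1 by simp]
      exact Real.sqrt_lt_sqrt (le_of_lt hs2pos) (by nlinarith)
    have hsq : HasDerivAt (fun y : ℝ => Real.sqrt (y^2 + c^2)) (x / s) x := by
      have hin : HasDerivAt (fun y : ℝ => y^2 + c^2) (2*x) x := by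
        simpa using (hasDerivAt_pow 2 x).add_const (c^2)
      have := (Real.hasDerivAt_sqrt (ne_of_gt hs2pos)).comp x hin
      refine this.congr_deriv ?_
      rw [← hs]
      field_simp
    have := (hasDerivAt_fAsym (by linarith : -1 < s) hs1).comp x hsq
    exact this.sub (hasDerivAt_fAsym (by linarith) (by nlinarith))
  have hmono : MonotoneOn F (Set.Icc 0 b) := by
    apply monotoneOn_of_deriv_nonneg (convex_Icc _ _) hcont.continuousOn
    · rw [interior_Icc]
      intro x hx
      exact (hd x hx).differentiableAt.differentiableWithinAt
    · rw [interior_Icc]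
      intro x hx
      rw [(hd x hx).deriv]
      set s := Real.sqrt (x^2 + c^2) with hs
      have hs2pos : 0 < x^2 + c^2 := by positivity
      have hspos : 0 < s := Real.sqrt_pos.2 hs2pos
      have hs2 : s^2 = x^2 + c^2 := Real.sq_sqrt (le_of_lt hs2pos)
      have hxs : x ≤ s := by
        have : x = Real.sqrt (x^2) := (Real.sqrt_sq (le_of_lt hx.1)).symm
        rw [this, hs]; exact Real.sqrt_le_sqrt (by nlinarith)
      have hbnn : 0 ≤ b := Real.sqrt_nonneg _
      have hs1 : s < 1 := by
        rw [hs, show (1:ℝ) = Real.sqrt 1 by simp]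
        apply Real.sqrt_lt_sqrt (le_of_lt hs2pos)
        have hb0 : 0 ≤ 1 - c^2 := by nlinarith
        have hb2 : b^2 = 1 - c^2 := Real.sq_sqrt hb0
        nlinarith [sq_lt_sq' (by linarith [hx.1] : -b < x) hx.2]
      have hkey : s * Afn x ≤ x * Afn s := Afn_ratio_mono hx.1 hxs hs1
      have h2 : (Real.log (1+x) - Real.log (1-x))/2 = (s * Afn x)/(2*s) := by
        unfold Afn; field_simp
      have h3 : (Real.log (1+s) - Real.log (1-s))/2 * (x/s) = (x * Afn s)/(2*s) := by
        unfold Afn; field_simp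
      rw [sub_nonneg, h2, h3, div_le_div_iff₀ (by positivity) (by positivity)]
      nlinarith [mul_le_mul_of_nonneg_right hkey (by positivity : (0:ℝ) ≤ 2*s)]
  have h0 : F 0 = fAsym c := by
    simp only [hF, fAsym_zero, sub_zero, ne_eq, OfNat.ofNat_ne_zero, not_false_eq_true, zero_pow,
      zero_add]
    rw [Real.sqrt_sq hc]
  have := hmono (Set.mem_Icc.2 ⟨le_refl 0, by positivity⟩)
    (Set.mem_Icc.2 ⟨ha, hab⟩) ha
  rw [h0] at this
  have h' : fAsym c ≤ fAsym (Real.sqrt (a^2 + c^2)) - fAsym a := this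
  linarith


lemma fAsym_abs (x : ℝ) : fAsym |x| = fAsym x := by
  rcases abs_cases x with ⟨h,_⟩|⟨h,_⟩
  · rw [h]
  · rw [h]
    unfold fAsym
    rw [show (1:ℝ) + -x = 1 - x by ring, show (1:ℝ) - -x = 1 + x by ring]
    ring

/-- **The relative entropy of asymmetry of a qubit Bloch state with respect to the `ℤ₂`
symmetry generated by Pauli X never increases under `Z`-dephasing:**
`f(r_x) + f(r_z) ≤ f(|r|)`. -/
theorem fAsym_add_le (rx ry rz : ℝ) (h : rx ^ 2 + ry ^ 2 + rz ^ 2 ≤ 1) :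
    fAsym rx + fAsym rz ≤ fAsym (Real.sqrt (rx ^ 2 + ry ^ 2 + rz ^ 2)) := by
  have hle : |rx|^2 + |rz|^2 ≤ rx ^ 2 + ry ^ 2 + rz ^ 2 := by
    rw [sq_abs, sq_abs]; nlinarith [sq_nonneg ry]
  have hkey := fAsym_key (abs_nonneg rx) (abs_nonneg rz) (hle.trans h)
  rw [fAsym_abs, fAsym_abs] at hkey
  refine hkey.trans ?_
  apply fAsym_monotoneOn
  · exact ⟨Real.sqrt_nonneg _, Real.sqrt_le_one.2 (hle.trans h)⟩
  · exact ⟨Real.sqrt_nonneg _, Real.sqrt_le_one.2 h⟩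
  · exact Real.sqrt_le_sqrt hle

end
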